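/- Linear weight recovery (core of Theorem 3): let p = r + s, let V₁ ∈ ℝ^{p×r} and V₂ ∈ ℝ^{p×s} satisfy V₁ᵀV₁ = I_r, V₂ᵀV₂ = I_s, and V₁ᵀV₂ = 0, and let E ∈ ℝ^{t×s} have spectral norm ‖E‖₂ < 1. Set S = V₁V₁ᵀ + V₂EᵀEV₂ᵀ ∈ ℝ^{p×p}. Then for every vector v ∈ ℝᵖ, Sv = v if and only if v lies in the column space of V₁ (i.e., v = V₁w for some w ∈ ℝʳ). Hence the eigenspace of S for the eigenvalue 1 is exactly the column span of V₁. -/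

import Mathlib

/-
If `Sv = v`, apply `V₂ᵀ`: orthonormality turns this into `EᵀE (V₂ᵀv) = V₂ᵀv`. Since `‖E‖₂ < 1`,
`‖V₂ᵀv‖² = ‖E V₂ᵀv‖² ≤ ‖E‖₂² ‖V₂ᵀv‖²` forces `V₂ᵀv = 0`, and then `v = Sv = V₁(V₁ᵀv)`.
Conversely `S V₁ = V₁` because `V₁ᵀV₁ = 1` and `V₂ᵀV₁ = 0`.
-/

open Matrix

/-- The spectral norm (ℓ²→ℓ² operator norm, largest singular value) of a real matrix. -/
noncomputable def matrixSpectralNorm {m n : Type*} [Fintype m] [Fintype n] [DecidableEq n]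
    (M : Matrix m n ℝ) : ℝ :=
  ‖LinearMap.toContinuousLinearMap (Matrix.toEuclideanLin M)‖

theorem isHermitian_transpose_mul_self_real {m n : Type*} [Fintype m] [Fintype n]
    (M : Matrix m n ℝ) : (Mᵀ * M).IsHermitian := by
  rw [← Matrix.conjTranspose_eq_transpose_of_trivial]
  exact Matrix.isHermitian_conjTranspose_mul_self M

/-- The nuclear norm of a real matrix: the sum of the square roots of the
eigenvalues of `Mᵀ * M`, i.e. the sum of the singular values of `M`. -/
noncomputable def nuclearNorm {m n : Type*} [Fintype m] [Fintype n] [DecidableEq n]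
    (M : Matrix m n ℝ) : ℝ :=
  ∑ i, Real.sqrt ((isHermitian_transpose_mul_self_real M).eigenvalues i)

/-- The largest (real) eigenvalue of a real square matrix, as the supremum of its
real spectrum.  For a symmetric matrix this is its largest eigenvalue. -/
noncomputable def lamMax {n : Type*} [Fintype n] [DecidableEq n] (S : Matrix n n ℝ) : ℝ :=
  sSup (spectrum ℝ S)

section Orthonormal

variable {R : Type*} [Semiring R] {p r s : Type*} [Fintype p] [Fintype r] [Fintype s]
  {V₁ : Matrix p r R} {V₂ : Matrix p s R}

theorem mul_transpose_add_conj_mul_left [DecidableEq r] (hV₁ : V₁ᵀ * V₁ = 1)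
    (hV₂₁ : V₂ᵀ * V₁ = 0) (M : Matrix s s R) : (V₁ * V₁ᵀ + V₂ * M * V₂ᵀ) * V₁ = V₁ := by
  rw [Matrix.add_mul, Matrix.mul_assoc V₁, hV₁, Matrix.mul_assoc _ V₂ᵀ, hV₂₁, Matrix.mul_one,
    Matrix.mul_zero, add_zero]

theorem transpose_mul_mul_transpose_add_conj [DecidableEq s] (hV₂ : V₂ᵀ * V₂ = 1)
    (hV₂₁ : V₂ᵀ * V₁ = 0) (M : Matrix s s R) : V₂ᵀ * (V₁ * V₁ᵀ + V₂ * M * V₂ᵀ) = M * V₂ᵀ := by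
  simp only [Matrix.mul_add, ← Matrix.mul_assoc, hV₂₁, hV₂, Matrix.zero_mul, Matrix.one_mul,
    zero_add]

end Orthonormal

theorem dotProduct_self_eq_norm_sq {n : Type*} [Fintype n] (x : n → ℝ) :
    x ⬝ᵥ x = ‖WithLp.toLp 2 x‖ ^ 2 := by
  rw [EuclideanSpace.real_norm_sq_eq]
  simp [dotProduct, sq]

section SpectralNorm

variable {m n : Type*} [Fintype m] [Fintype n] [DecidableEq n]

theorem dotProduct_mulVec_self_le (E : Matrix m n ℝ) (x : n → ℝ) :
    (E *ᵥ x) ⬝ᵥ (E *ᵥ x) ≤ matrixSpectralNorm E ^ 2 * (x ⬝ᵥ x) := by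
  rw [dotProduct_self_eq_norm_sq, dotProduct_self_eq_norm_sq, ← mul_pow]
  gcongr
  exact (LinearMap.toContinuousLinearMap (toEuclideanLin E)).le_opNorm (WithLp.toLp 2 x)

theorem eq_zero_of_transpose_mul_self_mulVec_eq {E : Matrix m n ℝ}
    (hE : matrixSpectralNorm E < 1) {x : n → ℝ} (hx : (Eᵀ * E) *ᵥ x = x) : x = 0 := by
  have hfix : x ⬝ᵥ x = (E *ᵥ x) ⬝ᵥ (E *ᵥ x) := calc
    x ⬝ᵥ x = x ⬝ᵥ ((Eᵀ * E) *ᵥ x) := by rw [hx]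
    _ = (E *ᵥ x) ⬝ᵥ (E *ᵥ x) := by
      rw [← mulVec_mulVec, dotProduct_mulVec, vecMul_transpose]
  have hsq : matrixSpectralNorm E ^ 2 < 1 := by
    have : 0 ≤ matrixSpectralNorm E := norm_nonneg _
    nlinarith
  have hle := dotProduct_mulVec_self_le E x
  have hnonneg : 0 ≤ x ⬝ᵥ x := dotProduct_self_star_nonneg x
  exact dotProduct_self_eq_zero.mp (by nlinarith)

end SpectralNorm

/-- linear weight recovery: with `p = r + s`, `V₁ᵀV₁ = I`, `V₂ᵀV₂ = I`,
`V₁ᵀV₂ = 0`, and `‖E‖₂ < 1`, set `S = V₁V₁ᵀ + V₂EᵀEV₂ᵀ`.  Then `Sv = v` iff `v` lies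
in the column space of `V₁`; the eigenspace of `S` for eigenvalue 1 is the column
span of `V₁`. -/
theorem linear_weight_recovery (r s t : ℕ)
    (V₁ : Matrix (Fin (r + s)) (Fin r) ℝ) (V₂ : Matrix (Fin (r + s)) (Fin s) ℝ)
    (hV₁ : V₁ᵀ * V₁ = 1) (hV₂ : V₂ᵀ * V₂ = 1) (hV₁₂ : V₁ᵀ * V₂ = 0)
    (E : Matrix (Fin t) (Fin s) ℝ) (hE : matrixSpectralNorm E < 1) :
    ∀ v : Fin (r + s) → ℝ,
      (V₁ * V₁ᵀ + V₂ * Eᵀ * E * V₂ᵀ).mulVec v = v ↔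
        ∃ w : Fin r → ℝ, v = V₁.mulVec w := by
  have hV₂₁ : V₂ᵀ * V₁ = 0 := by simpa using congrArg transpose hV₁₂
  have hS : V₁ * V₁ᵀ + V₂ * Eᵀ * E * V₂ᵀ = V₁ * V₁ᵀ + V₂ * (Eᵀ * E) * V₂ᵀ := by
    simp only [Matrix.mul_assoc]
  intro v
  rw [hS]
  constructor
  · intro hv
    have hfix : (Eᵀ * E) *ᵥ (V₂ᵀ *ᵥ v) = V₂ᵀ *ᵥ v := by
      conv_rhs => rw [← hv]
      rw [mulVec_mulVec, mulVec_mulVec, transpose_mul_mul_transpose_add_conj hV₂ hV₂₁]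
    have hv₂ : V₂ᵀ *ᵥ v = 0 := eq_zero_of_transpose_mul_self_mulVec_eq hE hfix
    have hE_part : (V₂ * (Eᵀ * E) * V₂ᵀ) *ᵥ v = 0 := by
      rw [← mulVec_mulVec, hv₂, mulVec_zero]
    rw [add_mulVec, hE_part, add_zero, ← mulVec_mulVec] at hv
    exact ⟨V₁ᵀ *ᵥ v, hv.symm⟩
  · rintro ⟨w, rfl⟩
    rw [mulVec_mulVec, mul_transpose_add_conj_mul_left hV₁ hV₂₁]
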